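/- Let V be symmetric positive definite p×p, γ ∈ ℝᵖ with ‖γ‖=1, J a p×(p-1) matrix with γᵀJ = 0 and A = (γ, J) invertible. Let Ṽ = JᵀVJ and Q₁ symmetric positive semidefinite with Q₁ ⪯ Ṽ. Define W = diag(γᵀV⁻¹γ, Ṽ⁻¹Q₁Ṽ⁻¹) (block diagonal). Then trace(V⁻¹) ≥ trace(A W Aᵀ). -/

import Mathlib

open Matrix
set_option linter.unusedSectionVars false
set_option maxHeartbeats 1000000

variable {α β : Type*} [Fintype α] [Fintype β] [DecidableEq α] [DecidableEq β]

lemma my_trace_nonneg {S : Matrix α α ℝ} (hS : S.PosSemidef) : 0 ≤ S.trace := by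
  rw [Matrix.trace]
  refine Finset.sum_nonneg fun i _ => ?_
  simpa [dotProduct, mulVec, Pi.single_apply, Finset.mul_sum] using hS.dotProduct_mulVec_nonneg (Pi.single i 1)

lemma my_trace_mul_nonneg {S K : Matrix α α ℝ} (hS : S.PosSemidef) (hK : K.PosSemidef) :
    0 ≤ (S * K).trace := by
  open scoped MatrixOrder in
  obtain ⟨B, hB⟩ := CStarAlgebra.nonneg_iff_eq_star_mul_self.mp hK.nonneg
  rw [star_eq_conjTranspose] at hB
  subst hB
  have h1 : (S * (Bᴴ * B)).trace = (B * S * Bᴴ).trace := by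
    rw [← Matrix.mul_assoc, Matrix.trace_mul_comm, Matrix.mul_assoc]
  rw [h1]
  exact my_trace_nonneg (hS.mul_mul_conjTranspose_same B)

lemma my_elim_dot (P : Matrix (α ⊕ β) (α ⊕ β) ℝ) (u v : β → ℝ) :
    (Sum.elim 0 u) ⬝ᵥ (P *ᵥ (Sum.elim 0 v)) = u ⬝ᵥ (P.toBlocks₂₂ *ᵥ v) := by
  simp [dotProduct, mulVec, Fintype.sum_sum_type, toBlocks₂₂]

lemma my_elim_dot' (u v : β → ℝ) :
    (Sum.elim 0 u : α ⊕ β → ℝ) ⬝ᵥ (Sum.elim 0 v) = u ⬝ᵥ v := by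
  simp [dotProduct, Fintype.sum_sum_type]

lemma my_trace_fromBlocks (A : Matrix α α ℝ) (B : Matrix α β ℝ) (C : Matrix β α ℝ)
    (D : Matrix β β ℝ) : (fromBlocks A B C D).trace = A.trace + D.trace := by
  simp [Matrix.trace, Fintype.sum_sum_type, fromBlocks]

lemma my_toBlocks22_hermitian {P : Matrix (α ⊕ β) (α ⊕ β) ℝ} (h : P.IsHermitian) :
    (P.toBlocks₂₂).IsHermitian := by
  ext i j
  simpa [toBlocks₂₂] using congrFun (congrFun h (Sum.inr i)) (Sum.inr j)

lemma my_toBlocks22_posDef {N : Matrix (α ⊕ β) (α ⊕ β) ℝ} (hN : N.PosDef) :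
    (N.toBlocks₂₂).PosDef := by
  refine Matrix.PosDef.of_dotProduct_mulVec_pos (my_toBlocks22_hermitian hN.1) fun x hx => ?_
  have hy : (Sum.elim 0 x : α ⊕ β → ℝ) ≠ 0 := by
    intro h
    exact hx (funext fun i => congrFun h (Sum.inr i))
  have := hN.dotProduct_mulVec_pos hy
  simpa [my_elim_dot] using this

lemma my_inv22 {N : Matrix (α ⊕ β) (α ⊕ β) ℝ} (hN : N.PosDef) :
    ((N⁻¹).toBlocks₂₂ - (N.toBlocks₂₂)⁻¹).PosSemidef := by
  have hM : (N⁻¹).PosDef := hN.inv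
  have hVt : (N.toBlocks₂₂).PosDef := my_toBlocks22_posDef hN
  have hVti : ((N.toBlocks₂₂)⁻¹).PosDef := hVt.inv
  set M := N⁻¹ with hMdef
  set Vt := N.toBlocks₂₂ with hVtdef
  have hNdet : IsUnit N.det := isUnit_iff_ne_zero.mpr hN.det_pos.ne'
  have hVtdet : IsUnit Vt.det := isUnit_iff_ne_zero.mpr hVt.det_pos.ne'
  have hNM : N * M = 1 := Matrix.mul_nonsing_inv N hNdet
  have hMN : M * N = 1 := Matrix.nonsing_inv_mul N hNdet
  have hMsymm : Mᵀ = M := hM.isHermitian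
  refine Matrix.PosSemidef.of_dotProduct_mulVec_nonneg ((my_toBlocks22_hermitian hM.1).sub hVti.1) fun x => ?_
  have hsx : (star x : β → ℝ) = x := by simp
  rw [hsx]
  set u : β → ℝ := Vt⁻¹ *ᵥ x with hu
  set y : α ⊕ β → ℝ := Sum.elim 0 x with hy
  set w : α ⊕ β → ℝ := Sum.elim 0 u with hw
  set z : α ⊕ β → ℝ := M *ᵥ y - w with hz
  have hpos : 0 ≤ z ⬝ᵥ (N *ᵥ z) := by simpa using hN.posSemidef.dotProduct_mulVec_nonneg z
  have hNz : N *ᵥ z = y - N *ᵥ w := by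
    rw [hz, mulVec_sub, mulVec_mulVec, hNM, one_mulVec]
  have hMyNw : (M *ᵥ y) ⬝ᵥ (N *ᵥ w) = x ⬝ᵥ u := by
    calc (M *ᵥ y) ⬝ᵥ (N *ᵥ w) = (y ᵥ* M) ⬝ᵥ (N *ᵥ w) := by
          rw [← mulVec_transpose, hMsymm]
      _ = y ⬝ᵥ (M *ᵥ (N *ᵥ w)) := (dotProduct_mulVec _ _ _).symm
      _ = y ⬝ᵥ ((M * N) *ᵥ w) := by rw [mulVec_mulVec]
      _ = y ⬝ᵥ w := by rw [hMN, one_mulVec]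
      _ = x ⬝ᵥ u := my_elim_dot' x u
  have hMyy : (M *ᵥ y) ⬝ᵥ y = y ⬝ᵥ (M *ᵥ y) := dotProduct_comm _ _
  have hwy : w ⬝ᵥ y = x ⬝ᵥ u := by
    rw [hw, hy, my_elim_dot', dotProduct_comm]
  have hwNw : w ⬝ᵥ (N *ᵥ w) = x ⬝ᵥ u := by
    calc w ⬝ᵥ (N *ᵥ w) = u ⬝ᵥ (Vt *ᵥ u) := my_elim_dot N u u
      _ = u ⬝ᵥ (Vt *ᵥ (Vt⁻¹ *ᵥ x)) := by rw [hu]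
      _ = u ⬝ᵥ ((Vt * Vt⁻¹) *ᵥ x) := by rw [mulVec_mulVec]
      _ = u ⬝ᵥ x := by rw [Matrix.mul_nonsing_inv Vt hVtdet, one_mulVec]
      _ = x ⬝ᵥ u := dotProduct_comm _ _
  have hexp : z ⬝ᵥ (N *ᵥ z) = y ⬝ᵥ (M *ᵥ y) - x ⬝ᵥ u := by
    rw [hNz, hz, sub_dotProduct, dotProduct_sub, dotProduct_sub, hMyNw, hMyy, hwy, hwNw]
    ring
  have hgoal : x ⬝ᵥ ((M.toBlocks₂₂ - Vt⁻¹) *ᵥ x) = y ⬝ᵥ (M *ᵥ y) - x ⬝ᵥ u := by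
    rw [sub_mulVec, dotProduct_sub, ← hu, ← my_elim_dot M x x, hy]
  linarith [hpos, hexp ▸ hpos]

/-- With W = diag(γᵀV⁻¹γ, Ṽ⁻¹Q₁Ṽ⁻¹), trace(V⁻¹) ≥ trace(A W Aᵀ). -/
theorem stmt15 {q : ℕ} (V : Matrix (Unit ⊕ Fin q) (Unit ⊕ Fin q) ℝ)
    (γ : Unit ⊕ Fin q → ℝ) (J : Matrix (Unit ⊕ Fin q) (Fin q) ℝ)
    (Q₁ : Matrix (Fin q) (Fin q) ℝ)
    (hV : V.PosDef) (hγ : ∑ i, γ i ^ 2 = 1) (horth : γ ᵥ* J = 0)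
    (hAdet : IsUnit ((Matrix.of fun i => Sum.elim (fun _ : Unit => γ i) (J i) :
      Matrix (Unit ⊕ Fin q) (Unit ⊕ Fin q) ℝ)).det)
    (hQ : Q₁.PosSemidef) (hQV : (Jᵀ * V * J - Q₁).PosSemidef) :
    let A : Matrix (Unit ⊕ Fin q) (Unit ⊕ Fin q) ℝ :=
      Matrix.of fun i => Sum.elim (fun _ : Unit => γ i) (J i)
    let Vt := Jᵀ * V * J
    let W : Matrix (Unit ⊕ Fin q) (Unit ⊕ Fin q) ℝ :=
      Matrix.fromBlocks (Matrix.of fun _ _ : Unit => γ ⬝ᵥ (V⁻¹ *ᵥ γ)) 0 0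
        (Vt⁻¹ * Q₁ * Vt⁻¹)
    (A * W * Aᵀ).trace ≤ (V⁻¹).trace := by
  intro A Vt W
  have hA_apply : ∀ i j, A i j = Sum.elim (fun _ : Unit => γ i) (J i) j := fun i j => rfl
  have hA : IsUnit A.det := hAdet
  have hAT : IsUnit Aᵀ.det := by rwa [Matrix.det_transpose]
  have hγ' : ∑ k, γ k * γ k = 1 := by simpa [sq] using hγ
  have horth' : ∀ j, ∑ k, γ k * J k j = 0 := fun j => by
    simpa [vecMul, dotProduct] using congrFun horth j
  have hAH : Aᴴ = Aᵀ := by ext i j; simp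
  -- N = AᵀVA is positive definite
  set N : Matrix (Unit ⊕ Fin q) (Unit ⊕ Fin q) ℝ := Aᵀ * V * A with hNdef
  have hAinj : Function.Injective (A.mulVec) :=
    Matrix.mulVec_injective_iff_isUnit.mpr ((Matrix.isUnit_iff_isUnit_det A).mpr hA)
  have hN : N.PosDef := by
    refine Matrix.PosDef.of_dotProduct_mulVec_pos ?_ ?_
    · rw [hNdef, ← hAH]
      exact Matrix.isHermitian_conjTranspose_mul_mul A hV.1
    · intro x hx
      have hAx : A *ᵥ x ≠ 0 := fun h => hx (hAinj (by simpa using h))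
      have := hV.dotProduct_mulVec_pos hAx
      have hrw : (star x) ⬝ᵥ (N *ᵥ x) = star (A *ᵥ x) ⬝ᵥ (V *ᵥ (A *ᵥ x)) := by
        simp only [star_trivial]
        rw [hNdef, Matrix.mul_assoc, ← mulVec_mulVec, dotProduct_mulVec,
          vecMul_transpose, ← mulVec_mulVec]
      rw [hrw]
      simpa using this
  have hNdet : IsUnit N.det := isUnit_iff_ne_zero.mpr hN.det_pos.ne'
  -- block structure
  have h22 : N.toBlocks₂₂ = Vt := by
    ext i j
    rfl
  have hVtPD : Vt.PosDef := h22 ▸ my_toBlocks22_posDef hN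
  have hVtdet : IsUnit Vt.det := isUnit_iff_ne_zero.mpr hVtPD.det_pos.ne'
  have hVti : (Vt⁻¹).PosDef := hVtPD.inv
  -- key identity V⁻¹ = A N⁻¹ Aᵀ
  have key : A * N⁻¹ * Aᵀ = V⁻¹ := by
    rw [hNdef, Matrix.mul_inv_rev, Matrix.mul_inv_rev, ← Matrix.mul_assoc,
      ← Matrix.mul_assoc, Matrix.mul_nonsing_inv A hA, Matrix.one_mul,
      Matrix.mul_assoc, Matrix.nonsing_inv_mul Aᵀ hAT, Matrix.mul_one]
  -- the (1,1) entry of N⁻¹ is γᵀ V⁻¹ γ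
  have he : Aᵀ *ᵥ γ = Sum.elim (fun _ : Unit => (1:ℝ)) 0 := by
    funext j
    cases j with
    | inl j => simpa [mulVec, dotProduct, hA_apply, mul_comm] using hγ'
    | inr j => simpa [mulVec, dotProduct, hA_apply, mul_comm] using horth' j
  have hg : γ ᵥ* A = Sum.elim (fun _ : Unit => (1:ℝ)) 0 := by
    funext j
    cases j with
    | inl j => simpa [vecMul, dotProduct, hA_apply] using hγ'
    | inr j => simpa [vecMul, dotProduct, hA_apply] using horth' j
  have hc : (N⁻¹) (Sum.inl ()) (Sum.inl ()) = γ ⬝ᵥ (V⁻¹ *ᵥ γ) := by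
    rw [← key]
    have : γ ⬝ᵥ ((A * N⁻¹ * Aᵀ) *ᵥ γ)
        = (γ ᵥ* A) ⬝ᵥ ((N⁻¹) *ᵥ (Aᵀ *ᵥ γ)) := by
      rw [← mulVec_mulVec, ← mulVec_mulVec, dotProduct_mulVec]
    rw [this, he, hg]
    simp [dotProduct, mulVec, Fintype.sum_sum_type]
  -- AᵀA = fromBlocks 1 0 0 JᵀJ
  have hD : Aᵀ * A = fromBlocks (1 : Matrix Unit Unit ℝ) 0 0 (Jᵀ * J) := by
    ext i j
    cases i with
    | inl i =>
      cases j with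
      | inl j => simpa [Matrix.mul_apply, hA_apply, fromBlocks] using hγ'
      | inr j => simpa [Matrix.mul_apply, hA_apply, fromBlocks] using horth' j
    | inr i =>
      cases j with
      | inl j => simpa [Matrix.mul_apply, hA_apply, fromBlocks, mul_comm] using horth' i
      | inr j => simp [Matrix.mul_apply, hA_apply, fromBlocks]
  -- decompose N⁻¹ - W
  have hMW : N⁻¹ - W = fromBlocks
      ((N⁻¹).toBlocks₁₁ - Matrix.of fun _ _ : Unit => γ ⬝ᵥ (V⁻¹ *ᵥ γ))
      ((N⁻¹).toBlocks₁₂) ((N⁻¹).toBlocks₂₁)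
      ((N⁻¹).toBlocks₂₂ - Vt⁻¹ * Q₁ * Vt⁻¹) := by
    conv_lhs => rw [← fromBlocks_toBlocks (N⁻¹)]
    ext i j
    cases i <;> cases j <;> simp [W, fromBlocks]
  -- positive semidefiniteness of the 2,2 block
  have p1 : ((N⁻¹).toBlocks₂₂ - Vt⁻¹).PosSemidef := by
    have := my_inv22 hN
    rwa [h22] at this
  have p2 : (Vt⁻¹ - Vt⁻¹ * Q₁ * Vt⁻¹).PosSemidef := by
    have hconj : (Vt⁻¹ * (Vt - Q₁) * (Vt⁻¹)ᴴ).PosSemidef :=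
      hQV.mul_mul_conjTranspose_same (Vt⁻¹)
    have hH : (Vt⁻¹)ᴴ = Vt⁻¹ := hVti.isHermitian
    have h1 : Vt⁻¹ * Vt = 1 := Matrix.nonsing_inv_mul Vt hVtdet
    have hiden : Vt⁻¹ * (Vt - Q₁) * Vt⁻¹ = Vt⁻¹ - Vt⁻¹ * Q₁ * Vt⁻¹ := by
      rw [Matrix.mul_sub, Matrix.sub_mul, h1, Matrix.one_mul]
    rw [← hiden]
    rwa [hH] at hconj
  have pS : ((N⁻¹).toBlocks₂₂ - Vt⁻¹ * Q₁ * Vt⁻¹).PosSemidef := by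
    have := p1.add p2
    rwa [sub_add_sub_cancel] at this
  have hK : (Jᵀ * J).PosSemidef := by
    simpa using Matrix.posSemidef_conjTranspose_mul_self (R := ℝ) J
  -- put everything together
  suffices h : 0 ≤ ((N⁻¹ - W) * (Aᵀ * A)).trace by
    have e1 : A * (N⁻¹ - W) * Aᵀ = A * N⁻¹ * Aᵀ - A * W * Aᵀ := by
      rw [Matrix.mul_sub, Matrix.sub_mul]
    have e2 : (A * (N⁻¹ - W) * Aᵀ).trace = ((N⁻¹ - W) * (Aᵀ * A)).trace := by
      rw [Matrix.trace_mul_cycle, Matrix.trace_mul_comm]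
    have e3 : (A * N⁻¹ * Aᵀ - A * W * Aᵀ).trace
        = (A * N⁻¹ * Aᵀ).trace - (A * W * Aᵀ).trace := Matrix.trace_sub _ _
    rw [← key]
    have := h
    rw [← e2, e1, e3] at this
    linarith
  rw [hMW, hD, fromBlocks_multiply, my_trace_fromBlocks]
  have t1 : (((N⁻¹).toBlocks₁₁ - Matrix.of fun _ _ : Unit => γ ⬝ᵥ (V⁻¹ *ᵥ γ))
        * (1 : Matrix Unit Unit ℝ)
      + (N⁻¹).toBlocks₁₂ * (0 : Matrix (Fin q) Unit ℝ)).trace = 0 := by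
    simp [Matrix.trace, toBlocks₁₁, hc]
  have t2 : 0 ≤ (((N⁻¹).toBlocks₂₂ - Vt⁻¹ * Q₁ * Vt⁻¹) * (Jᵀ * J)).trace :=
    my_trace_mul_nonneg pS hK
  rw [t1, zero_add]
  simpa using t2
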